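/- arXiv:2207.08216 — 2 statements merged into one kernel-verified Lean document; each statement's English description precedes it below -/
import Mathlib

section
/- Suppose A has full column rank, c ∈ ℝ^ℓ is fixed, and μ, λ > 0. Then every local minimizer of f_proj is a global minimizer: if x̄ ∈ ℝ^n and there exists a neighborhood U of x̄ such that f_proj(x) ≥ f_proj(x̄) for all x ∈ U, then f_proj(x̄) ≤ f_proj(x) for all x ∈ ℝ^n. -/
open Matrix BigOperators

noncomputable def fjoint {m n l : ℕ} (A : Matrix (Fin m) (Fin n) ℝ) (b : Fin m → ℝ)
    (D : Matrix (Fin l) (Fin n) ℝ) (c : Fin l → ℝ) (μ lam : ℝ)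
    (x : Fin n → ℝ) (y : Fin l → ℝ) : ℝ :=
  (1/2) * ∑ i, (A.mulVec x i - b i)^2
    + (lam^2/2) * ∑ i, (D.mulVec x i - y i + c i)^2
    + μ * ∑ i, |y i|

noncomputable def shrinkZ {n l : ℕ} (D : Matrix (Fin l) (Fin n) ℝ) (c : Fin l → ℝ)
    (μ lam : ℝ) (x : Fin n → ℝ) : Fin l → ℝ :=
  fun i => Real.sign (D.mulVec x i + c i) * max (|D.mulVec x i + c i| - μ / lam^2) 0

noncomputable def fproj {m n l : ℕ} (A : Matrix (Fin m) (Fin n) ℝ) (b : Fin m → ℝ)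
    (D : Matrix (Fin l) (Fin n) ℝ) (c : Fin l → ℝ) (μ lam : ℝ)
    (x : Fin n → ℝ) : ℝ :=
  fjoint A b D c μ lam x (shrinkZ D c μ lam x)

/-!
`f_proj x = min_y f_joint x y`: for fixed `x` the problem in `y` separates into scalar problems
`min_t (λ²/2) (v - t)² + μ |t|`, whose minimizer is the soft-thresholding of `v` at level `μ/λ²`,
i.e. `Z x`. As `f_joint` is jointly convex, its partial minimum `f_proj` is convex, and a local
minimizer of a convex function is a global one.
-/

open Set

section Convexity

variable {𝕜 E F β : Type*} [Semiring 𝕜] [PartialOrder 𝕜]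
  [AddCommMonoid E] [AddCommMonoid F] [AddCommMonoid β] [PartialOrder β]
  [Module 𝕜 E] [Module 𝕜 F]

theorem ConvexOn.finsetSum [IsOrderedAddMonoid β] [DistribMulAction 𝕜 β] {ι : Type*} {s : Set E}
    (hs : Convex 𝕜 s) (t : Finset ι) {f : ι → E → β} (hf : ∀ i ∈ t, ConvexOn 𝕜 s (f i)) :
    ConvexOn 𝕜 s fun x => ∑ i ∈ t, f i x := by
  classical
  induction t using Finset.induction_on with
  | empty => exact ⟨hs, fun _ _ _ _ _ _ _ _ _ => by simp⟩
  | insert i t hi ih =>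
    simp only [Finset.sum_insert hi]
    exact (hf i (t.mem_insert_self i)).add (ih fun j hj => hf j (Finset.mem_insert_of_mem hj))

theorem ConvexOn.comp_partialMinimizer [SMul 𝕜 β] {g : E × F → β} (hg : ConvexOn 𝕜 univ g)
    (z : E → F) (hz : ∀ x y, g (x, z x) ≤ g (x, y)) : ConvexOn 𝕜 univ fun x => g (x, z x) := by
  refine ⟨convex_univ, fun x _ x' _ a b ha hb hab => ?_⟩
  calc g (a • x + b • x', z (a • x + b • x'))
      ≤ g (a • x + b • x', a • z x + b • z x') := hz _ _
    _ = g (a • (x, z x) + b • (x', z x')) := rfl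
    _ ≤ a • g (x, z x) + b • g (x', z x') := hg.2 trivial trivial ha hb hab

end Convexity

theorem ConvexOn.comp_linearMap_add {E : Type*} [AddCommGroup E] [Module ℝ E] {φ : ℝ → ℝ}
    (hφ : ConvexOn ℝ univ φ) (ℓ : E →ₗ[ℝ] ℝ) (d : ℝ) : ConvexOn ℝ univ fun p => φ (ℓ p + d) := by
  have h := (hφ.translate_left d).comp_linearMap ℓ
  rw [preimage_univ, preimage_univ] at h
  exact h

theorem convexOn_fjoint {m n l : ℕ} (A : Matrix (Fin m) (Fin n) ℝ) (b : Fin m → ℝ)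
    (D : Matrix (Fin l) (Fin n) ℝ) (c : Fin l → ℝ) {μ : ℝ} (lam : ℝ) (hμ : 0 ≤ μ) :
    ConvexOn ℝ univ fun p : (Fin n → ℝ) × (Fin l → ℝ) => fjoint A b D c μ lam p.1 p.2 := by
  have hsq : ConvexOn ℝ univ fun u : ℝ => u ^ 2 := even_two.convexOn_pow
  have habs : ConvexOn ℝ univ fun u : ℝ => |u| := by
    have h : ConvexOn ℝ univ fun u : ℝ => ‖u‖ := convexOn_norm convex_univ
    simpa only [Real.norm_eq_abs] using h
  have hfit := ConvexOn.finsetSum convex_univ Finset.univ fun i _ =>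
    hsq.comp_linearMap_add
      (LinearMap.proj i ∘ₗ A.mulVecLin ∘ₗ LinearMap.fst ℝ (Fin n → ℝ) (Fin l → ℝ)) (-b i)
  have hcoupling := ConvexOn.finsetSum convex_univ Finset.univ fun i _ =>
    hsq.comp_linearMap_add (LinearMap.proj i ∘ₗ
      (D.mulVecLin ∘ₗ LinearMap.fst ℝ _ _ - LinearMap.snd ℝ (Fin n → ℝ) (Fin l → ℝ))) (c i)
  have hpenalty := ConvexOn.finsetSum convex_univ Finset.univ fun i _ =>
    habs.comp_linearMap_add (LinearMap.proj i ∘ₗ LinearMap.snd ℝ (Fin n → ℝ) (Fin l → ℝ)) 0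
  simp only [LinearMap.comp_apply, LinearMap.proj_apply, LinearMap.fst_apply, LinearMap.snd_apply,
    LinearMap.sub_apply, Matrix.mulVecLin_apply, Pi.sub_apply, add_zero, ← sub_eq_add_neg]
    at hfit hcoupling hpenalty
  exact ((hfit.smul (by norm_num : (0 : ℝ) ≤ 1 / 2)).add
    (hcoupling.smul (by positivity : (0 : ℝ) ≤ lam ^ 2 / 2))).add (hpenalty.smul hμ)

noncomputable def softThreshold (a v : ℝ) : ℝ := Real.sign v * max (|v| - a) 0

theorem shrinkZ_apply {n l : ℕ} (D : Matrix (Fin l) (Fin n) ℝ) (c : Fin l → ℝ) (μ lam : ℝ)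
    (x : Fin n → ℝ) (i : Fin l) :
    shrinkZ D c μ lam x i = softThreshold (μ / lam ^ 2) ((D *ᵥ x) i + c i) :=
  rfl

theorem isMinOn_softThreshold {a : ℝ} (ha : 0 ≤ a) (v : ℝ) :
    IsMinOn (fun t => (v - t) ^ 2 / 2 + a * |t|) univ (softThreshold a v) := by
  refine isMinOn_univ_iff.2 fun t => ?_
  rcases le_or_gt |v| a with hva | hva
  · have hvt : v * t ≤ a * |t| :=
      (le_abs_self _).trans <|
        (abs_mul v t).trans_le (mul_le_mul_of_nonneg_right hva (abs_nonneg t))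
    simp only [softThreshold, max_eq_right (sub_nonpos.2 hva), mul_zero, sub_zero, abs_zero]
    nlinarith [sq_nonneg t]
  · rcases lt_or_gt_of_ne (show v ≠ 0 by rintro rfl; simp at hva; linarith) with hv | hv
    · rw [abs_of_neg hv] at hva
      simp only [softThreshold, Real.sign_of_neg hv, abs_of_neg hv,
        max_eq_left (by linarith : 0 ≤ -v - a)]
      rw [abs_of_neg (by linarith : -1 * (-v - a) < 0)]
      nlinarith [sq_nonneg (v - t + a), mul_le_mul_of_nonneg_left (neg_abs_le t) ha]
    · rw [abs_of_pos hv] at hva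
      simp only [softThreshold, Real.sign_of_pos hv, abs_of_pos hv,
        max_eq_left (by linarith : 0 ≤ v - a)]
      rw [abs_of_pos (by linarith : 0 < 1 * (v - a))]
      nlinarith [sq_nonneg (v - t - a), mul_le_mul_of_nonneg_left (le_abs_self t) ha]

theorem fproj_le_fjoint {m n l : ℕ} (A : Matrix (Fin m) (Fin n) ℝ) (b : Fin m → ℝ)
    (D : Matrix (Fin l) (Fin n) ℝ) (c : Fin l → ℝ) {μ lam : ℝ} (hμ : 0 ≤ μ) (hlam : lam ≠ 0)
    (x : Fin n → ℝ) (y : Fin l → ℝ) : fproj A b D c μ lam x ≤ fjoint A b D c μ lam x y := by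
  have hlam2 : 0 < lam ^ 2 := by positivity
  have hcoord : ∀ i, lam ^ 2 / 2 * ((D *ᵥ x) i - shrinkZ D c μ lam x i + c i) ^ 2
      + μ * |shrinkZ D c μ lam x i| ≤ lam ^ 2 / 2 * ((D *ᵥ x) i - y i + c i) ^ 2 + μ * |y i| := by
    intro i
    have hscale : ∀ s, lam ^ 2 / 2 * ((D *ᵥ x) i - s + c i) ^ 2 + μ * |s|
        = lam ^ 2 * (((D *ᵥ x) i + c i - s) ^ 2 / 2 + μ / lam ^ 2 * |s|) := fun s => by
      field_simp
      ring
    rw [hscale, hscale, shrinkZ_apply]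
    exact mul_le_mul_of_nonneg_left
      (isMinOn_univ_iff.1 (isMinOn_softThreshold (div_nonneg hμ hlam2.le) _) (y i)) hlam2.le
  have hsum := Finset.sum_le_sum fun i (_ : i ∈ Finset.univ) => hcoord i
  simp only [Finset.sum_add_distrib, ← Finset.mul_sum] at hsum
  unfold fproj fjoint
  linarith

theorem stmt8_general {m n l : ℕ} (A : Matrix (Fin m) (Fin n) ℝ) (b : Fin m → ℝ)
    (D : Matrix (Fin l) (Fin n) ℝ) (c : Fin l → ℝ) (μ lam : ℝ)
    (hμ : 0 < μ) (hlam : 0 < lam)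
    (xb : Fin n → ℝ)
    (hloc : ∃ U ∈ nhds xb, ∀ x ∈ U, fproj A b D c μ lam xb ≤ fproj A b D c μ lam x) :
    ∀ x : Fin n → ℝ, fproj A b D c μ lam xb ≤ fproj A b D c μ lam x := by
  obtain ⟨U, hU, hmin⟩ := hloc
  have hconv : ConvexOn ℝ univ (fproj A b D c μ lam) :=
    (convexOn_fjoint A b D c lam hμ.le).comp_partialMinimizer (shrinkZ D c μ lam)
      fun x y => fproj_le_fjoint A b D c hμ.le hlam.ne' x y
  exact IsMinOn.of_isLocalMin_of_convex_univ (Filter.mem_of_superset hU hmin) hconv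

theorem stmt8 {m n l : ℕ} (A : Matrix (Fin m) (Fin n) ℝ) (b : Fin m → ℝ)
    (D : Matrix (Fin l) (Fin n) ℝ) (c : Fin l → ℝ) (μ lam : ℝ)
    (hμ : 0 < μ) (hlam : 0 < lam)
    (hA : ∀ x : Fin n → ℝ, A.mulVec x = 0 → x = 0)
    (xb : Fin n → ℝ)
    (hloc : ∃ U ∈ nhds xb, ∀ x ∈ U, fproj A b D c μ lam xb ≤ fproj A b D c μ lam x) :
    ∀ x : Fin n → ℝ, fproj A b D c μ lam xb ≤ fproj A b D c μ lam x :=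
  stmt8_general A b D c μ lam hμ hlam xb hloc
end

section
/- Suppose A has full column rank and λ > 0. Then f_joint is coercive on ℝ^n × ℝ^ℓ: f_joint(x,y) → ∞ as ‖(x,y)‖ → ∞; equivalently, every sublevel set {(x,y) : f_joint(x,y) ≤ t} is bounded. -/
/-! Only the data-fit term and the ℓ¹ term matter: the middle term is nonnegative. On a
sublevel set `{f_joint ≤ t}` they give `‖Ax - b‖ ≤ √(2t)` and `‖y‖₁ ≤ t / μ`. Since `A` is
injective on a finite-dimensional space it is anti-Lipschitz, so `x` is bounded as well; in the
proper space `ℝⁿ × ℝˡ` bounded sublevel sets mean coercivity. -/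

open Matrix BigOperators Filter Bornology Metric

theorem tendsto_cocompact_atTop_of_isBounded_sublevel {E : Type*} [PseudoMetricSpace E]
    [ProperSpace E] {f : E → ℝ} (hf : ∀ t, IsBounded {p | f p ≤ t}) :
    Tendsto f (cocompact E) atTop := by
  rw [← cobounded_eq_cocompact, Filter.tendsto_atTop]
  exact fun t => mem_of_superset (isBounded_def.1 (hf t)) fun p (hp : ¬f p ≤ t) =>
    (not_le.1 hp).le

theorem pi_norm_le_sum_norm {ι : Type*} [Fintype ι] {E : ι → Type*}
    [∀ i, SeminormedAddGroup (E i)] (f : ∀ i, E i) : ‖f‖ ≤ ∑ i, ‖f i‖ :=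
  (pi_norm_le_iff_of_nonneg (by positivity)).2 fun i =>
    Finset.single_le_sum (fun j _ => norm_nonneg (f j)) (Finset.mem_univ i)

theorem pi_norm_le_sqrt_sum_sq {ι : Type*} [Fintype ι] (v : ι → ℝ) :
    ‖v‖ ≤ √(∑ i, v i ^ 2) :=
  (pi_norm_le_iff_of_nonneg (Real.sqrt_nonneg _)).2 fun i =>
    Real.abs_le_sqrt <| Finset.single_le_sum (fun j _ => sq_nonneg (v j)) (Finset.mem_univ i)

section fjoint

variable {m n l : ℕ} (A : Matrix (Fin m) (Fin n) ℝ) (b : Fin m → ℝ)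
  (D : Matrix (Fin l) (Fin n) ℝ) (c : Fin l → ℝ) {μ : ℝ} (lam : ℝ)

theorem sum_sq_sub_le_two_mul_fjoint (hμ : 0 ≤ μ) (x : Fin n → ℝ) (y : Fin l → ℝ) :
    ∑ i, (A *ᵥ x - b) i ^ 2 ≤ 2 * fjoint A b D c μ lam x y := by
  have h₂ : 0 ≤ lam ^ 2 / 2 * ∑ i, (D *ᵥ x - y + c) i ^ 2 := by positivity
  have h₃ : 0 ≤ μ * ∑ i, |y i| := by positivity
  simp only [fjoint, Pi.add_apply, Pi.sub_apply] at h₂ ⊢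
  linarith

theorem mul_sum_abs_le_fjoint (x : Fin n → ℝ) (y : Fin l → ℝ) :
    μ * ∑ i, |y i| ≤ fjoint A b D c μ lam x y := by
  have h₁ : 0 ≤ 1 / 2 * ∑ i, (A *ᵥ x - b) i ^ 2 := by positivity
  have h₂ : 0 ≤ lam ^ 2 / 2 * ∑ i, (D *ᵥ x - y + c) i ^ 2 := by positivity
  simp only [fjoint, Pi.add_apply, Pi.sub_apply] at h₁ h₂ ⊢
  linarith

theorem isBounded_setOf_fjoint_le (hμ : 0 < μ) (hA : ∀ x : Fin n → ℝ, A *ᵥ x = 0 → x = 0)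
    (t : ℝ) : IsBounded {p : (Fin n → ℝ) × (Fin l → ℝ) | fjoint A b D c μ lam p.1 p.2 ≤ t} := by
  obtain ⟨K, -, hK⟩ := (mulVecLin A).injective_iff_antilipschitz.1 <|
    (injective_iff_map_eq_zero _).2 hA
  refine ((hK.isBounded_preimage (isBounded_closedBall (x := b) (r := √(2 * t)))).prod
    (isBounded_closedBall (x := 0) (r := t / μ))).subset ?_
  rintro ⟨x, y⟩ (hp : fjoint A b D c μ lam x y ≤ t)
  constructor
  · calc dist (A *ᵥ x) b = ‖A *ᵥ x - b‖ := dist_eq_norm _ _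
      _ ≤ √(∑ i, (A *ᵥ x - b) i ^ 2) := pi_norm_le_sqrt_sum_sq _
      _ ≤ √(2 * t) := by
        gcongr
        linarith [sum_sq_sub_le_two_mul_fjoint A b D c lam hμ.le x y]
  · rw [mem_closedBall_zero_iff, le_div_iff₀' hμ]
    calc μ * ‖y‖ ≤ μ * ∑ i, |y i| := by
          gcongr
          exact pi_norm_le_sum_norm y
      _ ≤ t := (mul_sum_abs_le_fjoint A b D c lam x y).trans hp

end fjoint

theorem stmt13_general {m n l : ℕ} (A : Matrix (Fin m) (Fin n) ℝ) (b : Fin m → ℝ)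
    (D : Matrix (Fin l) (Fin n) ℝ) (c : Fin l → ℝ) (μ lam : ℝ)
    (hμ : 0 < μ)
    (hA : ∀ x : Fin n → ℝ, A.mulVec x = 0 → x = 0) :
    (Filter.Tendsto (fun p : (Fin n → ℝ) × (Fin l → ℝ) => fjoint A b D c μ lam p.1 p.2)
        (Filter.cocompact _) Filter.atTop)
    ∧ ∀ t : ℝ, Bornology.IsBounded
        {p : (Fin n → ℝ) × (Fin l → ℝ) | fjoint A b D c μ lam p.1 p.2 ≤ t} :=
  have hsub := isBounded_setOf_fjoint_le A b D c lam hμ hA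
  ⟨tendsto_cocompact_atTop_of_isBounded_sublevel hsub, hsub⟩

theorem stmt13 {m n l : ℕ} (A : Matrix (Fin m) (Fin n) ℝ) (b : Fin m → ℝ)
    (D : Matrix (Fin l) (Fin n) ℝ) (c : Fin l → ℝ) (μ lam : ℝ)
    (hμ : 0 < μ) (hlam : 0 < lam)
    (hA : ∀ x : Fin n → ℝ, A.mulVec x = 0 → x = 0) :
    (Filter.Tendsto (fun p : (Fin n → ℝ) × (Fin l → ℝ) => fjoint A b D c μ lam p.1 p.2)
        (Filter.cocompact _) Filter.atTop)
    ∧ ∀ t : ℝ, Bornology.IsBounded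
        {p : (Fin n → ℝ) × (Fin l → ℝ) | fjoint A b D c μ lam p.1 p.2 ≤ t} :=
  stmt13_general A b D c μ lam hμ hA
end
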